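/- arXiv:2301.10485 — 5 statements merged into one kernel-verified Lean document; each statement's English description precedes it below -/
import Mathlib

section
/- Let S ⊆ (IO)^ω be a specification and P a preMealy machine with initial state p0. Then S is P-realizable if and only if (1) L_ω(P) ⊆ S, and (2) for every hole h = (p,i) of P there exist an output o_h ∈ O and a Mealy machine M_h such that for all u ∈ Left_p, L_ω(M_h) ⊆ (u·i·o_h)^{-1} S. -/
open scoped Classical

/-- A preMealy machine over input alphabet `I`, output alphabet `O`, with state type `M`. -/
structure PreMealy (I O M : Type) where
  init : M
  trans : M → I → Option (O × M)

namespace PreMealy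

variable {I O M : Type}

/-- One step of a preMealy machine on a pair (input, output): defined iff the transition
on the input is defined and produces exactly the given output. -/
noncomputable def step (P : PreMealy I O M) (m : M) (p : I × O) : Option M :=
  match P.trans m p.1 with
  | some (o, m') => if o = p.2 then some m' else none
  | none => none

/-- Running a preMealy machine on a finite word of (input, output) pairs. -/
noncomputable def runFrom (P : PreMealy I O M) : M → List (I × O) → Option M
  | m, [] => some m
  | m, p :: u =>
    match P.step m p with
    | some m' => runFrom P m' u
    | none => none

/-- The language `L(P)` of finite words in `(I·O)*` accepted by `P`. -/
def lang (P : PreMealy I O M) : Set (List (I × O)) :=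
  { u | (P.runFrom P.init u).isSome }

/-- The ω-language `L_ω(P)`: ω-words all of whose finite prefixes belong to `L(P)`. -/
def omegaLang (P : PreMealy I O M) : Set (ℕ → I × O) :=
  { w | ∀ n : ℕ, ((List.range n).map w) ∈ P.lang }

/-- `P` is a (complete) Mealy machine when its transition function is total. -/
def Total (P : PreMealy I O M) : Prop :=
  ∀ m i, (P.trans m i).isSome

/-- A hole of `P` is a pair (state, input) on which the transition is undefined. -/
def Hole (P : PreMealy I O M) (m : M) (i : I) : Prop :=
  P.trans m i = none

/-- `Left_p`: the set of finite words reaching state `p` from the initial state. -/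
def leftLang (P : PreMealy I O M) (p : M) : Set (List (I × O)) :=
  { u | P.runFrom P.init u = some p }

end PreMealy

/-- `P₁ ⪯ P₂`: `P₁` is a subgraph of `P₂`. -/
def Subgraph {I O M₁ M₂ : Type} (P₁ : PreMealy I O M₁) (P₂ : PreMealy I O M₂) : Prop :=
  ∃ Φ : M₁ → M₂, Function.Injective Φ ∧ Φ P₁.init = P₂.init ∧
    ∀ p i o q, P₁.trans p i = some (o, q) ↔ P₂.trans (Φ p) i = some (o, Φ q)

/-- `S` is `P`-realizable: some (finite-state, complete) Mealy machine extends `P`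
and its ω-language is included in `S ⊆ (I·O)^ω`. -/
def PRealizable {I O M : Type} (P : PreMealy I O M) (S : Set (ℕ → I × O)) : Prop :=
  ∃ (N : Type) (_ : Fintype N) (Mach : PreMealy I O N),
    Mach.Total ∧ Subgraph P Mach ∧ Mach.omegaLang ⊆ S

/-- Quotient (left derivative) of a set of ω-words by a finite word. -/
def wordQuot {α : Type} (u : List α) (S : Set (ℕ → α)) : Set (ℕ → α) :=
  { v | (fun n => if h : n < u.length then u.get ⟨n, h⟩ else v (n - u.length)) ∈ S }

/-- Interleaving of an ω-word over `I × O` into an ω-word over `Σ = I ⊕ O`. -/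
def interleave {I O : Type} (w : ℕ → I × O) : ℕ → I ⊕ O :=
  fun n => if n % 2 = 0 then Sum.inl (w (n / 2)).1 else Sum.inr (w (n / 2)).2

/-- Flattening of a finite word over `I × O` into a word over `Σ = I ⊕ O`. -/
def flattenWord {I O : Type} (u : List (I × O)) : List (I ⊕ O) :=
  u.flatMap fun p => [Sum.inl p.1, Sum.inr p.2]

/-- `P`-realizability of a specification over `Σ = I ⊕ O`. -/
def PRealizableSigma {I O M : Type} (P : PreMealy I O M) (S : Set (ℕ → I ⊕ O)) : Prop :=
  ∃ (N : Type) (_ : Fintype N) (Mach : PreMealy I O N),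
    Mach.Total ∧ Subgraph P Mach ∧ ∀ w ∈ Mach.omegaLang, interleave w ∈ S

/-- Realizability of a specification over `Σ = I ⊕ O` by some Mealy machine. -/
def RealizableSigma (I O : Type) (S : Set (ℕ → I ⊕ O)) : Prop :=
  ∃ (N : Type) (_ : Fintype N) (Mach : PreMealy I O N),
    Mach.Total ∧ ∀ w ∈ Mach.omegaLang, interleave w ∈ S

/-- A universal coBüchi automaton; `col1 q` means state `q` has color 1. -/
structure UCB (σ Q : Type) where
  init : Set Q
  δ : Q → σ → Set Q
  δ_ne : ∀ q a, (δ q a).Nonempty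
  col1 : Q → Prop

namespace UCB

variable {σ Q : Type}

/-- `ρ` is a run of `A` on the ω-word `w`. -/
def Run (A : UCB σ Q) (w : ℕ → σ) (ρ : ℕ → Q) : Prop :=
  ρ 0 ∈ A.init ∧ ∀ n, ρ (n + 1) ∈ A.δ (ρ n) (w n)

/-- `L^∀_k(A)`: every run visits 1-colored states at most `k` times. -/
def langK (A : UCB σ Q) (k : ℕ) : Set (ℕ → σ) :=
  { w | ∀ ρ : ℕ → Q, A.Run w ρ →
      ∀ s : Finset ℕ, (∀ j ∈ s, A.col1 (ρ j)) → s.card ≤ k }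

/-- `L^∀(A)`: every run visits 1-colored states only finitely often. -/
def langForall (A : UCB σ Q) : Set (ℕ → σ) :=
  { w | ∀ ρ : ℕ → Q, A.Run w ρ → { j | A.col1 (ρ j) }.Finite }

/-- A run prefix of `A` on a finite word `p` (only `ρ 0, …, ρ p.length` are relevant). -/
def RunPrefix (A : UCB σ Q) (p : List σ) (ρ : ℕ → Q) : Prop :=
  ρ 0 ∈ A.init ∧ ∀ (j : ℕ) (h : j < p.length), ρ (j + 1) ∈ A.δ (ρ j) (p.get ⟨j, h⟩)

/-- The set of states reachable from a set of states while reading a finite word. -/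
def postSet (A : UCB σ Q) : Set Q → List σ → Set Q
  | S, [] => S
  | S, a :: u => postSet A (⋃ q ∈ S, A.δ q a) u

end UCB

/-- The set `CF(A,k)` of `k`-counting functions, as integer-valued functions. -/
def CFset (Q : Type) (k : ℕ) : Set (Q → ℤ) :=
  { f | ∀ q, -1 ≤ f q ∧ f q ≤ (k : ℤ) + 1 }

/-- The transition function `δ^D` of the determinization `D(A,k)` on counting functions. -/
noncomputable def detTransFun {σ Q : Type} [Fintype Q] (A : UCB σ Q) (k : ℕ)
    (f : Q → ℤ) (a : σ) : Q → ℤ := fun q =>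
  let pred : Finset Q := Finset.univ.filter fun q' => q ∈ A.δ q' a ∧ 0 ≤ f q'
  if h : pred.Nonempty then
    min (pred.sup' h f + (if A.col1 q then 1 else 0)) ((k : ℤ) + 1)
  else -1

/-- The (unique) run of `D(A,k)` on an ω-word `w`, starting from `f`. -/
noncomputable def detRun {σ Q : Type} [Fintype Q] (A : UCB σ Q) (k : ℕ)
    (f : Q → ℤ) (w : ℕ → σ) : ℕ → Q → ℤ
  | 0 => f
  | n + 1 => detTransFun A k (detRun A k f w n) (w n)

/-- The state of `D(A,k)` reached from `f` after reading a finite word. -/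
noncomputable def detPostW {σ Q : Type} [Fintype Q] (A : UCB σ Q) (k : ℕ) :
    (Q → ℤ) → List σ → Q → ℤ
  | f, [] => f
  | f, a :: u => detPostW A k (detTransFun A k f a) u

/-- The initial counting function `f₀` of `D(A,k)`. -/
noncomputable def initCF {σ Q : Type} (A : UCB σ Q) : Q → ℤ := fun q =>
  if q ∈ A.init then (if A.col1 q then 1 else 0) else -1

/-- `L(D(A,k)[f])`: ω-words whose run of `D(A,k)` from `f` never visits an unsafe
counting function (one taking the value `k+1`). -/
def langD {σ Q : Type} [Fintype Q] (A : UCB σ Q) (k : ℕ) (f : Q → ℤ) :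
    Set (ℕ → σ) :=
  { w | ∀ n, ¬ ∃ q, detRun A k f w n q = (k : ℤ) + 1 }

/-- A complete deterministic safety automaton: the set `bad` of unsafe states is a trap. -/
structure DetSafety (σ Q : Type) where
  start : Q
  δ : Q → σ → Q
  bad : Set Q
  trap : ∀ q ∈ bad, ∀ a, δ q a ∈ bad

namespace DetSafety

variable {σ Q : Type}

/-- State reached after reading a finite word. -/
def postW (A : DetSafety σ Q) : Q → List σ → Q
  | q, [] => q
  | q, a :: u => postW A (A.δ q a) u

/-- The run of a deterministic automaton on an ω-word. -/
def runOn (A : DetSafety σ Q) (w : ℕ → σ) : ℕ → Q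
  | 0 => A.start
  | n + 1 => A.δ (runOn A w n) (w n)

/-- The (safety) ω-language: the run never enters an unsafe state. -/
def omegaLang (A : DetSafety σ Q) : Set (ℕ → σ) :=
  { w | ∀ n, runOn A w n ∉ A.bad }

end DetSafety

/-- A complete deterministic automaton (no acceptance condition). -/
structure DetAuto (σ Q : Type) where
  start : Q
  δ : Q → σ → Q

/-- State reached after reading a finite word. -/
def DetAuto.postW {σ Q : Type} (A : DetAuto σ Q) : Q → List σ → Q
  | q, [] => q
  | q, a :: u => DetAuto.postW A (A.δ q a) u

/-- Domination order between collections: every element of `A` is below some element of `B`. -/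
def acLE {α : Type} (r : α → α → Prop) (A B : Set α) : Prop :=
  ∀ x ∈ A, ∃ y ∈ B, r x y

/-- Downward closure of a collection of subsets of `Y`. -/
def dcl {Y : Type} (A : Set (Set Y)) : Set (Set Y) :=
  { X | ∃ X' ∈ A, X ⊆ X' }

/-- The merged relation `U(∼, p)` for a non-congruent point with successors `s, s'`. -/
def Umerge {M : Type} (r : M → M → Prop) (s s' : M) : M → M → Prop :=
  fun y y' => r y y' ∨ (r y s ∧ r y' s') ∨ (r y' s ∧ r y s')

/-- Prefix closure of a set of finite words over `I × O`. -/
def prefsE {I O : Type} (E : Set (List (I × O))) : Set (List (I × O)) :=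
  { u | ∃ e ∈ E, u <+: e }

/-- Consistency of a set of examples: the output is uniquely determined by each
prefix ending with an input. -/
def ConsistentE {I O : Type} (E : Set (List (I × O))) : Prop :=
  ∀ (u : List (I × O)) (i : I) (o o' : O),
    (u ++ [(i, o)]) ∈ prefsE E → (u ++ [(i, o')]) ∈ prefsE E → o = o'

/-- The prefix-tree acceptor `PTA(E)`: states are the prefixes of `E` (together with ε). -/
noncomputable def PTA {I O : Type} (E : Set (List (I × O))) :
    PreMealy I O (↥(insert ([] : List (I × O)) (prefsE E))) where
  init := ⟨[], Set.mem_insert _ _⟩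
  trans := fun u i =>
    if h : ∃ o : O, (u.1 ++ [(i, o)]) ∈ prefsE E then
      some (h.choose, ⟨u.1 ++ [(i, h.choose)], Set.mem_insert_of_mem _ h.choose_spec⟩)
    else none

/-- The fixpoint labelling `F*` of the states of a preMealy machine by counting functions. -/
noncomputable def Fstar {I O M Q : Type} [Fintype Q] (P : PreMealy I O M)
    (A : UCB (I ⊕ O) Q) (k : ℕ) (m : M) : Q → ℤ := fun q =>
  sSup (insert (-1 : ℤ)
    { z | ∃ u ∈ P.leftLang m, detPostW A k (initCF A) (flattenWord u) q = z })

section Aux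

variable {I O M : Type}

def prependW {α : Type} (U : List α) (v : ℕ → α) : ℕ → α :=
  fun n => if h : n < U.length then U.get ⟨n, h⟩ else v (n - U.length)

lemma mem_wordQuot_iff {α : Type} (U : List α) (S : Set (ℕ → α)) (v : ℕ → α) :
    v ∈ wordQuot U S ↔ prependW U v ∈ S := Iff.rfl

lemma map_range_prependW {α : Type} (U : List α) (v : ℕ → α) (n : ℕ) :
    (List.range n).map (prependW U v) = U.take n ++ (List.range (n - U.length)).map v := by
  apply List.ext_getElem
  · simp; omega
  · intro j h1 h2
    simp only [List.length_map, List.length_range] at h1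
    rw [List.getElem_map, List.getElem_range, List.getElem_append]
    by_cases hj : j < U.length
    · rw [dif_pos (by simp only [List.length_take]; omega)]
      rw [List.getElem_take]
      simp [prependW, hj]
    · rw [dif_neg (by simp only [List.length_take]; omega)]
      rw [List.getElem_map, List.getElem_range]
      have h3 : prependW U v j = v (j - U.length) := dif_neg hj
      rw [h3]
      congr 1
      simp only [List.length_take]
      omega

lemma range_map_add {α : Type} (w : ℕ → α) (a b : ℕ) :
    (List.range (a + b)).map w
      = (List.range a).map w ++ (List.range b).map (fun j => w (a + j)) := by
  rw [List.range_add, List.map_append, List.map_map]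
  rfl

namespace PreMealy

lemma step_congr2 (P₁ P₂ : PreMealy I O M) (h : P₁.trans = P₂.trans) :
    P₁.step = P₂.step := by
  funext m p; unfold step; rw [h]

lemma runFrom_congr2 (P₁ P₂ : PreMealy I O M) (h : P₁.trans = P₂.trans) :
    P₁.runFrom = P₂.runFrom := by
  funext m u
  induction u generalizing m with
  | nil => rfl
  | cons p u ih =>
    unfold runFrom
    rw [step_congr2 P₁ P₂ h]
    cases P₂.step m p with
    | none => rfl
    | some m' => exact ih m'

lemma runFrom_append (P : PreMealy I O M) (m : M) (a b : List (I × O)) :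
    P.runFrom m (a ++ b) = (P.runFrom m a).bind fun m' => P.runFrom m' b := by
  induction a generalizing m with
  | nil => simp [runFrom]
  | cons p a ih =>
    cases h : P.step m p with
    | none => simp [runFrom, h]
    | some m' => simp [runFrom, h, ih]

lemma runFrom_singleton (P : PreMealy I O M) (m : M) (p : I × O) :
    P.runFrom m [p] = P.step m p := by
  cases h : P.step m p with
  | none => simp [runFrom, h]
  | some m' => simp [runFrom, h]

lemma step_lift {M₁ M₂ : Type} (P₁ : PreMealy I O M₁) (P₂ : PreMealy I O M₂)
    (Φ : M₁ → M₂)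
    (hΦ : ∀ p i o q, P₁.trans p i = some (o, q) ↔ P₂.trans (Φ p) i = some (o, Φ q))
    {m m₂ : M₁} {p : I × O} (hs : P₁.step m p = some m₂) :
    P₂.step (Φ m) p = some (Φ m₂) := by
  unfold step at hs ⊢
  cases ht : P₁.trans m p.1 with
  | none => rw [ht] at hs; cases hs
  | some x =>
    obtain ⟨oo, qq⟩ := x
    rw [ht] at hs
    change (if oo = p.2 then some qq else none) = some m₂ at hs
    by_cases ho : oo = p.2
    · rw [if_pos ho] at hs
      have hqq : qq = m₂ := by injection hs
      subst hqq
      have h2 : P₂.trans (Φ m) p.1 = some (oo, Φ qq) := (hΦ m p.1 oo qq).1 ht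
      rw [h2]
      change (if oo = p.2 then some (Φ qq) else none) = some (Φ qq)
      rw [if_pos ho]
    · rw [if_neg ho] at hs
      cases hs

lemma runFrom_lift {M₁ M₂ : Type} (P₁ : PreMealy I O M₁) (P₂ : PreMealy I O M₂)
    (Φ : M₁ → M₂)
    (hΦ : ∀ p i o q, P₁.trans p i = some (o, q) ↔ P₂.trans (Φ p) i = some (o, Φ q))
    (u : List (I × O)) (m m' : M₁) (h : P₁.runFrom m u = some m') :
    P₂.runFrom (Φ m) u = some (Φ m') := by
  induction u generalizing m with
  | nil =>
    simp only [runFrom, Option.some.injEq] at h ⊢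
    rw [h]
  | cons p u ih =>
    unfold runFrom at h ⊢
    cases hs : P₁.step m p with
    | none => rw [hs] at h; cases h
    | some m₂ =>
      rw [hs] at h
      rw [step_lift P₁ P₂ Φ hΦ hs]
      exact ih m₂ h

end PreMealy

end Aux
section Comb

variable {I O M : Type} (P : PreMealy I O M)

def HoleT : Type := {pi : M × I // P.trans pi.1 pi.2 = none}

variable (N : ∀ m i, P.trans m i = none → Type)
variable (Mh : ∀ m i (h : P.trans m i = none), PreMealy I O (N m i h))
variable (oh : ∀ m i, P.trans m i = none → O)

abbrev CState : Type := M ⊕ Σ h : HoleT P, N h.1.1 h.1.2 h.2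

noncomputable def comb : PreMealy I O (CState P N) where
  init := Sum.inl P.init
  trans := fun s i =>
    match s with
    | Sum.inl m =>
      if h : P.trans m i = none then
        some (oh m i h, Sum.inr ⟨⟨(m, i), h⟩, (Mh m i h).init⟩)
      else (P.trans m i).map fun p => (p.1, Sum.inl p.2)
    | Sum.inr s =>
      ((Mh s.1.1.1 s.1.1.2 s.1.2).trans s.2 i).map fun p => (p.1, Sum.inr ⟨s.1, p.2⟩)

lemma comb_trans_inl (m : M) (i : I) :
    (comb P N Mh oh).trans (Sum.inl m) i =
      if h : P.trans m i = none then
        some (oh m i h, Sum.inr ⟨⟨(m, i), h⟩, (Mh m i h).init⟩)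
      else (P.trans m i).map fun p => (p.1, Sum.inl p.2) := rfl

lemma comb_trans_inr (s : Σ h : HoleT P, N h.1.1 h.1.2 h.2) (i : I) :
    (comb P N Mh oh).trans (Sum.inr s) i =
      ((Mh s.1.1.1 s.1.1.2 s.1.2).trans s.2 i).map fun p => (p.1, Sum.inr ⟨s.1, p.2⟩) := rfl

lemma comb_total (htot : ∀ m i h, (Mh m i h).Total) : (comb P N Mh oh).Total := by
  intro s i
  cases s with
  | inl m =>
    rw [comb_trans_inl]
    by_cases h : P.trans m i = none
    · rw [dif_pos h]; rfl
    · rw [dif_neg h]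
      obtain ⟨x, hx⟩ := Option.ne_none_iff_exists'.mp h
      rw [hx]; rfl
  | inr s =>
    rw [comb_trans_inr]
    obtain ⟨x, hx⟩ := Option.isSome_iff_exists.mp (htot s.1.1.1 s.1.1.2 s.1.2 s.2 i)
    rw [hx]; rfl

lemma comb_trans_iff (p : M) (i : I) (o : O) (q : M) :
    P.trans p i = some (o, q) ↔
      (comb P N Mh oh).trans (Sum.inl p) i = some (o, Sum.inl q) := by
  rw [comb_trans_inl]
  constructor
  · intro h
    rw [dif_neg (by rw [h]; exact fun hc => by cases hc), h]
    rfl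
  · intro h
    by_cases hn : P.trans p i = none
    · rw [dif_pos hn] at h
      simp only [Option.some.injEq, Prod.mk.injEq] at h
      exact absurd h.2 (by exact fun hc => by cases hc)
    · rw [dif_neg hn] at h
      obtain ⟨x, hx⟩ := Option.ne_none_iff_exists'.mp hn
      obtain ⟨xo, xq⟩ := x
      rw [hx] at h
      simp only [Option.map_some, Option.some.injEq, Prod.mk.injEq,
        Sum.inl.injEq] at h
      rw [hx, h.1, h.2]

lemma comb_step_inr (hh : HoleT P) (n : N hh.1.1 hh.1.2 hh.2) (p : I × O) :
    (comb P N Mh oh).step (Sum.inr ⟨hh, n⟩) p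
      = ((Mh hh.1.1 hh.1.2 hh.2).step n p).map (fun n' => Sum.inr ⟨hh, n'⟩) := by
  unfold PreMealy.step
  rw [comb_trans_inr]
  cases ht : (Mh hh.1.1 hh.1.2 hh.2).trans n p.1 with
  | none => rfl
  | some x =>
    obtain ⟨xo, xq⟩ := x
    show (if xo = p.2 then some (Sum.inr ⟨hh, xq⟩ : CState P N) else none)
        = Option.map (fun n' => (Sum.inr ⟨hh, n'⟩ : CState P N))
            (if xo = p.2 then some xq else none)
    by_cases ho : xo = p.2
    · rw [if_pos ho, if_pos ho]; rfl
    · rw [if_neg ho, if_neg ho]; rfl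

lemma comb_runFrom_inr (u : List (I × O)) (hh : HoleT P) (n : N hh.1.1 hh.1.2 hh.2) :
    (comb P N Mh oh).runFrom (Sum.inr ⟨hh, n⟩) u
      = ((Mh hh.1.1 hh.1.2 hh.2).runFrom n u).map (fun n' => Sum.inr ⟨hh, n'⟩) := by
  induction u generalizing n with
  | nil => rfl
  | cons p u ih =>
    unfold PreMealy.runFrom
    rw [comb_step_inr]
    cases hs : (Mh hh.1.1 hh.1.2 hh.2).step n p with
    | none => rfl
    | some n' => exact ih n'

lemma comb_step_inl (m : M) (p : I × O) :
    (comb P N Mh oh).step (Sum.inl m) p =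
      if h : P.trans m p.1 = none then
        (if oh m p.1 h = p.2
          then some (Sum.inr ⟨⟨(m, p.1), h⟩, (Mh m p.1 h).init⟩) else none)
      else (P.step m p).map Sum.inl := by
  unfold PreMealy.step
  rw [comb_trans_inl]
  by_cases h : P.trans m p.1 = none
  · rw [dif_pos h, dif_pos h]
  · rw [dif_neg h, dif_neg h]
    obtain ⟨x, hx⟩ := Option.ne_none_iff_exists'.mp h
    obtain ⟨xo, xq⟩ := x
    rw [hx]
    show (if xo = p.2 then some (Sum.inl xq : CState P N) else none)
      = Option.map Sum.inl (if xo = p.2 then some xq else none)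
    by_cases ho : xo = p.2
    · rw [if_pos ho, if_pos ho]; rfl
    · rw [if_neg ho, if_neg ho]; rfl

lemma comb_runFrom_inl_rev (u : List (I × O)) (m m' : M)
    (h : (comb P N Mh oh).runFrom (Sum.inl m) u = some (Sum.inl m')) :
    P.runFrom m u = some m' := by
  induction u generalizing m with
  | nil =>
    unfold PreMealy.runFrom at h ⊢
    injection h with h
    injection h with h
    rw [h]
  | cons p u ih =>
    unfold PreMealy.runFrom at h ⊢
    rw [comb_step_inl] at h
    by_cases hn : P.trans m p.1 = none
    · rw [dif_pos hn] at h
      by_cases ho : oh m p.1 hn = p.2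
      · rw [if_pos ho] at h
        have h' : (comb P N Mh oh).runFrom
            (Sum.inr ⟨⟨(m, p.1), hn⟩, (Mh m p.1 hn).init⟩) u = some (Sum.inl m') := h
        replace h' := (comb_runFrom_inr P N Mh oh u ⟨(m, p.1), hn⟩ (Mh m p.1 hn).init).symm.trans h'
        obtain ⟨n', -, hcon⟩ := Option.map_eq_some_iff.mp h'
        cases hcon
      · rw [if_neg ho] at h
        simp at h
    · rw [dif_neg hn] at h
      cases hs : P.step m p with
      | none =>
        rw [hs] at h
        simp at h
      | some m₂ =>
        rw [hs] at h
        exact ih m₂ h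

end Comb
lemma PreMealy.step_pair {I O M : Type} (P : PreMealy I O M) (m : M) (i : I) (o : O)
    (q : M) (h : P.trans m i = some (o, q)) : P.step m (i, o) = some q := by
  have h0 : P.step m (i, o) =
      (match P.trans m i with
        | some (o', m') => if o' = o then some m' else none
        | none => none) := rfl
  rw [h0, h]
  exact if_pos rfl

/-- `S` is `P`-realizable iff `L_ω(P) ⊆ S` and every hole `(p,i)` of `P`
admits an output `o` and a Mealy machine `M_h` such that for all `u ∈ Left_p`,
`L_ω(M_h) ⊆ (u·i·o)⁻¹ S`. -/
theorem stmt0 {I O M : Type} [Fintype I] [Nonempty I] [Fintype O] [Nonempty O]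
    [Fintype M] (P : PreMealy I O M) (S : Set (ℕ → I × O)) :
    PRealizable P S ↔
      P.omegaLang ⊆ S ∧
      ∀ p i, P.Hole p i →
        ∃ o : O, ∃ (N : Type) (_ : Fintype N) (Mh : PreMealy I O N),
          Mh.Total ∧ ∀ u ∈ P.leftLang p, Mh.omegaLang ⊆ wordQuot (u ++ [(i, o)]) S := by
  constructor
  · rintro ⟨Nn, ftN, Mach, hTot, ⟨Φ, hΦinj, hΦinit, hΦ⟩, hS⟩
    constructor
    · intro w hw
      apply hS
      intro n
      obtain ⟨m', hm'⟩ := Option.isSome_iff_exists.mp (hw n)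
      have hl := PreMealy.runFrom_lift P Mach Φ hΦ _ _ _ hm'
      rw [hΦinit] at hl
      exact Option.isSome_iff_exists.mpr ⟨_, hl⟩
    · intro p i hpi
      obtain ⟨⟨o, q⟩, hoq⟩ := Option.isSome_iff_exists.mp (hTot (Φ p) i)
      refine ⟨o, Nn, ftN, { Mach with init := q }, hTot, ?_⟩
      intro u hu v hv
      rw [mem_wordQuot_iff]
      apply hS
      have hrunU : Mach.runFrom Mach.init (u ++ [(i, o)]) = some q := by
        rw [PreMealy.runFrom_append]
        have h1 : Mach.runFrom Mach.init u = some (Φ p) := by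
          have hl := PreMealy.runFrom_lift P Mach Φ hΦ u P.init p hu
          rwa [hΦinit] at hl
        rw [h1, Option.bind_some, PreMealy.runFrom_singleton,
          PreMealy.step_pair Mach (Φ p) i o q hoq]
      have hvM : ∀ nn : ℕ, (Mach.runFrom q ((List.range nn).map v)).isSome := by
        intro nn
        have h2 := hv nn
        have h3 : ({ Mach with init := q } : PreMealy I O Nn).runFrom
            = Mach.runFrom :=
          PreMealy.runFrom_congr2 ({ Mach with init := q }) Mach rfl
        rw [← h3]
        exact h2
      intro n
      show (Mach.runFrom Mach.init
        ((List.range n).map (prependW (u ++ [(i, o)]) v))).isSome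
      rw [map_range_prependW, PreMealy.runFrom_append]
      by_cases hn : (u ++ [(i, o)]).length ≤ n
      · rw [List.take_of_length_le hn, hrunU, Option.bind_some]
        exact hvM _
      · have h0 : n - (u ++ [(i, o)]).length = 0 := by omega
        rw [h0]
        simp only [List.range_zero, List.map_nil]
        have hsplit : Mach.runFrom Mach.init
            ((u ++ [(i, o)]).take n ++ (u ++ [(i, o)]).drop n) = some q := by
          rw [List.take_append_drop]; exact hrunU
        rw [PreMealy.runFrom_append] at hsplit
        cases hx : Mach.runFrom Mach.init ((u ++ [(i, o)]).take n) with
        | none => rw [hx] at hsplit; cases hsplit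
        | some m1 => rfl
  · rintro ⟨hsub, hholes⟩
    choose ohF NF ftF MhF hAll using hholes
    have hMhTot : ∀ m i (h : P.trans m i = none), (MhF m i h).Total :=
      fun m i h => (hAll m i h).1
    haveI : Finite (HoleT P) :=
      inferInstanceAs (Finite {pi : M × I // P.trans pi.1 pi.2 = none})
    haveI : Fintype (HoleT P) := Fintype.ofFinite _
    haveI : ∀ h : HoleT P, Fintype (NF h.1.1 h.1.2 h.2) := fun h => ftF _ _ _
    refine ⟨CState P NF, inferInstanceAs (Fintype (M ⊕ Σ h : HoleT P, NF h.1.1 h.1.2 h.2)),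
      comb P NF MhF ohF, comb_total P NF MhF ohF hMhTot,
      ⟨Sum.inl, Sum.inl_injective, rfl, comb_trans_iff P NF MhF ohF⟩, ?_⟩
    intro w hw
    by_cases hA : ∀ n, ∃ m : M, (comb P NF MhF ohF).runFrom (Sum.inl P.init)
        ((List.range n).map w) = some (Sum.inl m)
    · apply hsub
      intro n
      obtain ⟨m, hm⟩ := hA n
      exact Option.isSome_iff_exists.mpr
        ⟨m, comb_runFrom_inl_rev P NF MhF ohF _ P.init m hm⟩
    · push_neg at hA
      have hEx : ∃ n, ∀ m : M, (comb P NF MhF ohF).runFrom (Sum.inl P.init)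
          ((List.range n).map w) ≠ some (Sum.inl m) := hA
      obtain ⟨n₀, hn₀spec, hn₀min⟩ : ∃ n₀, (∀ m : M, (comb P NF MhF ohF).runFrom
            (Sum.inl P.init) ((List.range n₀).map w) ≠ some (Sum.inl m)) ∧
          ∀ j < n₀, ∃ m : M, (comb P NF MhF ohF).runFrom (Sum.inl P.init)
            ((List.range j).map w) = some (Sum.inl m) := by
        refine ⟨Nat.find hEx, Nat.find_spec hEx, fun j hj => ?_⟩
        have := Nat.find_min hEx hj
        push_neg at this
        exact this
      cases n₀ with
      | zero => exact absurd rfl (hn₀spec P.init)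
      | succ k =>
        obtain ⟨p, hp⟩ := hn₀min k (Nat.lt_succ_self k)
        have hrsucc : (comb P NF MhF ohF).runFrom (Sum.inl P.init)
            ((List.range (k + 1)).map w)
            = (comb P NF MhF ohF).step (Sum.inl p) (w k) := by
          rw [List.range_succ, List.map_append, PreMealy.runFrom_append, hp,
            Option.bind_some]
          show (comb P NF MhF ohF).runFrom (Sum.inl p) [w k] = _
          rw [PreMealy.runFrom_singleton]
        obtain ⟨s, hs⟩ := Option.isSome_iff_exists.mp (hw (k + 1))
        cases s with
        | inl m => exact absurd hs (hn₀spec m)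
        | inr t =>
          have hstep : (comb P NF MhF ohF).step (Sum.inl p) (w k)
              = some (Sum.inr t) := by rw [← hrsucc]; exact hs
          replace hstep := (comb_step_inl P NF MhF ohF p (w k)).symm.trans hstep
          by_cases hn : P.trans p (w k).1 = none
          · rw [dif_pos hn] at hstep
            by_cases ho : ohF p (w k).1 hn = (w k).2
            · rw [if_pos ho] at hstep
              injection hstep with hstep
              injection hstep with hstep
              -- hstep : ⟨⟨(p,(w k).1),hn⟩, init⟩ = t
              have hleft : (List.range k).map w ∈ P.leftLang p :=
                comb_runFrom_inl_rev P NF MhF ohF _ P.init p hp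
              have hrk : (comb P NF MhF ohF).runFrom (Sum.inl P.init)
                  ((List.range (k + 1)).map w)
                  = some (Sum.inr ⟨⟨(p, (w k).1), hn⟩, (MhF p (w k).1 hn).init⟩) := by
                rw [hrsucc]
                exact (comb_step_inl P NF MhF ohF p (w k)).trans (by rw [dif_pos hn, if_pos ho])
              have hv : (fun j => w (k + 1 + j)) ∈ (MhF p (w k).1 hn).omegaLang := by
                intro nn
                have h1 := hw (k + 1 + nn)
                rw [range_map_add] at h1
                have h1' : ((comb P NF MhF ohF).runFrom (Sum.inl P.init)
                    ((List.range (k + 1)).map w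
                      ++ (List.range nn).map (fun j => w (k + 1 + j)))).isSome := h1
                rw [PreMealy.runFrom_append, hrk, Option.bind_some] at h1'
                obtain ⟨x, hx⟩ := Option.isSome_iff_exists.mp h1'
                replace hx := (comb_runFrom_inr P NF MhF ohF _ ⟨(p, (w k).1), hn⟩
                  (MhF p (w k).1 hn).init).symm.trans hx
                obtain ⟨a, ha, -⟩ := Option.map_eq_some_iff.mp hx
                exact Option.isSome_iff_exists.mpr ⟨a, ha⟩
              have hq := (hAll p (w k).1 hn).2 ((List.range k).map w) hleft hv
              rw [mem_wordQuot_iff] at hq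
              have hwk : ((w k).1, ohF p (w k).1 hn) = w k := by rw [ho]
              have hweq : prependW ((List.range k).map w
                  ++ [((w k).1, ohF p (w k).1 hn)]) (fun j => w (k + 1 + j)) = w := by
                rw [hwk]
                have hUr : (List.range k).map w ++ [w k]
                    = (List.range (k + 1)).map w := by
                  rw [List.range_succ, List.map_append]
                  rfl
                funext j
                unfold prependW
                rw [hUr]
                by_cases hj : j < ((List.range (k + 1)).map w).length
                · rw [dif_pos hj]
                  simp only [List.get_eq_getElem, List.getElem_map, List.getElem_range]
                · rw [dif_neg hj]
                  simp only [List.length_map, List.length_range] at hj ⊢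
                  congr 1
                  omega
              rw [hweq] at hq
              exact hq
            · rw [if_neg ho] at hstep
              simp at hstep
          · rw [dif_neg hn] at hstep
            obtain ⟨a, -, hcon⟩ := Option.map_eq_some_iff.mp hstep
            cases hcon
end

section
/- For every universal coBüchi automaton A over a finite alphabet Σ and every k ∈ ℕ: L^∀_k(A) = L(D(A,k)), i.e. an ω-word w is such that every run of A on w visits 1-colored states at most k times if and only if the unique run of the determinization D(A,k) on w never visits an unsafe counting function. -/
open scoped Classical

/-! Reading a word `w`, the value of the counting function of `D(A,k)` at a state `q` after `n`
letters is the largest number of 1-colored visits along a run prefix of `A` of length `n` ending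
in `q`, capped at `k+1` (and `-1` if there is no such prefix). Hence `D(A,k)` hits `k+1` exactly
when some run prefix, and therefore some run, has more than `k` visits to 1-colored states. -/

namespace UCB

variable {σ Q : Type} (A : UCB σ Q)

def IsRunPrefix (w : ℕ → σ) (n : ℕ) (ρ : ℕ → Q) : Prop :=
  ρ 0 ∈ A.init ∧ ∀ j < n, ρ (j + 1) ∈ A.δ (ρ j) (w j)

noncomputable def col1Visits (ρ : ℕ → Q) (n : ℕ) : Finset ℕ :=
  (Finset.range (n + 1)).filter fun j => A.col1 (ρ j)

variable {A}

lemma col1Visits_congr {ρ ρ' : ℕ → Q} {n : ℕ} (h : ∀ j ≤ n, ρ j = ρ' j) :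
    A.col1Visits ρ n = A.col1Visits ρ' n :=
  Finset.filter_congr fun j hj => by rw [h j (Nat.lt_succ_iff.mp (Finset.mem_range.mp hj))]

lemma card_col1Visits_zero (ρ : ℕ → Q) :
    ((A.col1Visits ρ 0).card : ℤ) = if A.col1 (ρ 0) then 1 else 0 := by
  by_cases h : A.col1 (ρ 0) <;> simp [col1Visits, Finset.filter_singleton, h]

lemma card_col1Visits_succ (ρ : ℕ → Q) (n : ℕ) :
    ((A.col1Visits ρ (n + 1)).card : ℤ) =
      (A.col1Visits ρ n).card + if A.col1 (ρ (n + 1)) then 1 else 0 := by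
  rw [col1Visits, col1Visits, Finset.range_add_one (n := n + 1), Finset.filter_insert]
  split_ifs
  · rw [Finset.card_insert_of_notMem (by simp)]
    push_cast
    rfl
  · simp

lemma mem_langK_iff {k : ℕ} {w : ℕ → σ} :
    w ∈ A.langK k ↔ ∀ ρ, A.Run w ρ → ∀ n, (A.col1Visits ρ n).card ≤ k := by
  refine ⟨fun hw ρ hρ n => hw ρ hρ _ fun j hj => (Finset.mem_filter.mp hj).2, ?_⟩
  intro hw ρ hρ s hs
  obtain ⟨n, hn⟩ : ∃ n, s ⊆ Finset.range (n + 1) :=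
    ⟨s.sup id, fun j hj => Finset.mem_range.mpr (Nat.lt_succ_of_le (Finset.le_sup (f := id) hj))⟩
  calc s.card ≤ (A.col1Visits ρ n).card :=
        Finset.card_le_card fun j hj => Finset.mem_filter.mpr ⟨hn hj, hs j hj⟩
    _ ≤ k := hw ρ hρ n

lemma Run.isRunPrefix {w : ℕ → σ} {ρ : ℕ → Q} (h : A.Run w ρ) (n : ℕ) : A.IsRunPrefix w n ρ :=
  ⟨h.1, fun j _ => h.2 j⟩

lemma IsRunPrefix.update {w : ℕ → σ} {n : ℕ} {ρ : ℕ → Q} {q : Q} (hρ : A.IsRunPrefix w n ρ)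
    (hq : q ∈ A.δ (ρ n) (w n)) : A.IsRunPrefix w (n + 1) (Function.update ρ (n + 1) q) := by
  refine ⟨by simpa using hρ.1, fun j hj => ?_⟩
  rcases Nat.lt_succ_iff_lt_or_eq.mp hj with hj | rfl
  · simpa [Function.update_of_ne (by omega : j + 1 ≠ n + 1),
      Function.update_of_ne (by omega : j ≠ n + 1)] using hρ.2 j hj
  · simpa using hq

variable (A)

noncomputable def extendRun (w : ℕ → σ) (n : ℕ) (ρ : ℕ → Q) : ℕ → Q
  | 0 => ρ 0
  | j + 1 => if j + 1 ≤ n then ρ (j + 1) else (A.δ_ne (extendRun w n ρ j) (w j)).some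

variable {A}

lemma extendRun_of_le {w : ℕ → σ} {n : ℕ} {ρ : ℕ → Q} :
    ∀ {j}, j ≤ n → A.extendRun w n ρ j = ρ j
  | 0, _ => rfl
  | _ + 1, hj => if_pos hj

lemma IsRunPrefix.run_extendRun {w : ℕ → σ} {n : ℕ} {ρ : ℕ → Q} (hρ : A.IsRunPrefix w n ρ) :
    A.Run w (A.extendRun w n ρ) := by
  refine ⟨hρ.1, fun j => ?_⟩
  by_cases hj : j + 1 ≤ n
  · rw [extendRun_of_le hj, extendRun_of_le (Nat.le_of_succ_le hj)]
    exact hρ.2 j hj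
  · simp only [extendRun, if_neg hj]
    exact Set.Nonempty.some_mem _

end UCB

section Determinization

variable {σ Q : Type} [Fintype Q] (A : UCB σ Q) (k : ℕ)

lemma le_detTransFun {f : Q → ℤ} {a : σ} {q q' : Q} (hq : q ∈ A.δ q' a) (hf : 0 ≤ f q') :
    min (f q' + if A.col1 q then 1 else 0) ((k : ℤ) + 1) ≤ detTransFun A k f a q := by
  have hmem : q' ∈ Finset.univ.filter fun p => q ∈ A.δ p a ∧ 0 ≤ f p := by simp [hq, hf]
  simp only [detTransFun]
  rw [dif_pos ⟨q', hmem⟩]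
  gcongr
  exact Finset.le_sup' f hmem

lemma exists_pred_of_detTransFun_nonneg {f : Q → ℤ} {a : σ} {q : Q}
    (h : 0 ≤ detTransFun A k f a q) :
    ∃ q', q ∈ A.δ q' a ∧ 0 ≤ f q' ∧
      detTransFun A k f a q ≤ f q' + if A.col1 q then 1 else 0 := by
  simp only [detTransFun] at h ⊢
  by_cases hne : (Finset.univ.filter fun p => q ∈ A.δ p a ∧ 0 ≤ f p).Nonempty
  · rw [dif_pos hne] at h ⊢
    obtain ⟨q', hq', hsup⟩ := Finset.exists_mem_eq_sup' hne f
    obtain ⟨hδ, hf⟩ := (Finset.mem_filter.mp hq').2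
    exact ⟨q', hδ, hf, hsup ▸ min_le_left _ _⟩
  · rw [dif_neg hne] at h
    omega

variable (w : ℕ → σ)

lemma detRun_le (n : ℕ) (q : Q) : detRun A k (initCF A) w n q ≤ (k : ℤ) + 1 := by
  cases n with
  | zero => simp only [detRun, initCF]; split_ifs <;> omega
  | succ n =>
    simp only [detRun, detTransFun]
    split
    · exact min_le_right _ _
    · omega

variable {A k w}

lemma min_card_col1Visits_le_detRun {n : ℕ} {ρ : ℕ → Q} (hρ : A.IsRunPrefix w n ρ) :
    min ((A.col1Visits ρ n).card : ℤ) ((k : ℤ) + 1) ≤ detRun A k (initCF A) w n (ρ n) := by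
  induction n with
  | zero => simp [detRun, initCF, hρ.1, UCB.card_col1Visits_zero]
  | succ n ih =>
    have ih := ih ⟨hρ.1, fun j hj => hρ.2 j (Nat.lt_succ_of_lt hj)⟩
    have hstep := le_detTransFun A k (hρ.2 n n.lt_succ_self)
      (f := detRun A k (initCF A) w n) (by omega)
    rw [UCB.card_col1Visits_succ]
    simp only [detRun]
    omega

lemma exists_isRunPrefix_of_detRun_nonneg {n : ℕ} {q : Q}
    (h : 0 ≤ detRun A k (initCF A) w n q) :
    ∃ ρ, A.IsRunPrefix w n ρ ∧ ρ n = q ∧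
      detRun A k (initCF A) w n q ≤ (A.col1Visits ρ n).card := by
  induction n generalizing q with
  | zero =>
    have hq : q ∈ A.init := by
      by_contra hq
      simp [detRun, initCF, hq] at h
    refine ⟨fun _ => q, ⟨hq, by omega⟩, rfl, ?_⟩
    simp [detRun, initCF, hq, UCB.card_col1Visits_zero]
  | succ n ih =>
    obtain ⟨q', hδ, hf, hle⟩ := exists_pred_of_detTransFun_nonneg A k h
    obtain ⟨ρ, hρ, rfl, hρle⟩ := ih hf
    refine ⟨Function.update ρ (n + 1) q, hρ.update hδ, by simp, ?_⟩
    rw [UCB.card_col1Visits_succ, UCB.col1Visits_congr (ρ' := ρ) fun j hj =>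
      Function.update_of_ne (by omega) _ _]
    simp only [detRun, Function.update_self] at hle ⊢
    omega

end Determinization

theorem stmt2_general {σ Q : Type} [Fintype Q]
    (A : UCB σ Q) (k : ℕ) :
    A.langK k = langD A k (initCF A) := by
  ext w
  rw [UCB.mem_langK_iff]
  constructor
  · rintro hw n ⟨q, hq⟩
    have hq0 : 0 ≤ detRun A k (initCF A) w n q := by omega
    obtain ⟨ρ, hρ, rfl, hle⟩ := exists_isRunPrefix_of_detRun_nonneg hq0
    have hcard := hw _ hρ.run_extendRun n
    rw [UCB.col1Visits_congr (ρ' := ρ) fun j hj => UCB.extendRun_of_le hj] at hcard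
    omega
  · intro hw ρ hρ n
    have hlow := min_card_col1Visits_le_detRun (k := k) (hρ.isRunPrefix n)
    have hup := detRun_le A k w n (ρ n)
    have hsafe : detRun A k (initCF A) w n (ρ n) ≠ (k : ℤ) + 1 := fun h => hw n ⟨_, h⟩
    omega

/-- correctness of the determinization, `L^∀_k(A) = L(D(A,k))`. -/
theorem stmt2 {σ Q : Type} [Fintype σ] [Fintype Q] [Nonempty Q]
    (A : UCB σ Q) (k : ℕ) :
    A.langK k = langD A k (initCF A) :=
  stmt2_general A k
end

section
/- For every universal coBüchi automaton A, every k ∈ ℕ, and all counting functions f_1, f_2 ∈ CF(A,k) with f_1 ⪯ f_2: L(D(A,k)[f_2]) ⊆ L(D(A,k)[f_1]); consequently, if L(D(A,k)[f_2]) is realizable then L(D(A,k)[f_1]) is realizable. -/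
open scoped Classical

lemma detTrans_mono {σ Q : Type} [Fintype Q] (A : UCB σ Q) (k : ℕ)
    {f g : Q → ℤ} (h : ∀ q, f q ≤ g q) (a : σ) (q : Q) :
    detTransFun A k f a q ≤ detTransFun A k g a q := by
  unfold detTransFun
  simp only []
  set predf : Finset Q := Finset.univ.filter fun q' => q ∈ A.δ q' a ∧ 0 ≤ f q' with hpf
  set predg : Finset Q := Finset.univ.filter fun q' => q ∈ A.δ q' a ∧ 0 ≤ g q' with hpg
  have hsub : predf ⊆ predg := by
    intro x hx
    simp only [hpf, hpg, Finset.mem_filter] at hx ⊢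
    exact ⟨hx.1, hx.2.1, le_trans hx.2.2 (h x)⟩
  by_cases h1 : predf.Nonempty
  · have h2 : predg.Nonempty := h1.mono hsub
    rw [dif_pos h1, dif_pos h2]
    apply min_le_min _ le_rfl
    apply add_le_add _ le_rfl
    apply Finset.sup'_le
    intro x hx
    exact le_trans (h x) (Finset.le_sup' g (hsub hx))
  · rw [dif_neg h1]
    by_cases h2 : predg.Nonempty
    · rw [dif_pos h2]
      apply le_min _ (by linarith)
      obtain ⟨x, hx⟩ := h2
      have h0 : (0:ℤ) ≤ g x := (Finset.mem_filter.mp hx).2.2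
      have := Finset.le_sup' g hx
      have hxx : (0:ℤ) ≤ (if A.col1 q then 1 else 0) := by split <;> norm_num
      linarith
    · rw [dif_neg h2]

lemma detTrans_le_top {σ Q : Type} [Fintype Q] (A : UCB σ Q) (k : ℕ)
    (f : Q → ℤ) (a : σ) (q : Q) : detTransFun A k f a q ≤ (k:ℤ) + 1 := by
  unfold detTransFun
  simp only []
  split
  · exact min_le_right _ _
  · linarith

lemma detRun_mono {σ Q : Type} [Fintype Q] (A : UCB σ Q) (k : ℕ)
    {f g : Q → ℤ} (h : ∀ q, f q ≤ g q) (w : ℕ → σ) (n : ℕ) (q : Q) :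
    detRun A k f w n q ≤ detRun A k g w n q := by
  induction n generalizing q with
  | zero => exact h q
  | succ n ih => exact detTrans_mono A k ih (w n) q


/-- for counting functions `f₁ ⪯ f₂`, `L(D(A,k)[f₂]) ⊆ L(D(A,k)[f₁])`,
hence realizability of `L(D(A,k)[f₂])` implies realizability of `L(D(A,k)[f₁])`. -/
theorem stmt3 {I O Q : Type} [Fintype I] [Nonempty I] [Fintype O] [Nonempty O]
    [Fintype Q] [Nonempty Q]
    (A : UCB (I ⊕ O) Q) (k : ℕ) (f₁ f₂ : Q → ℤ)
    (h₁ : f₁ ∈ CFset Q k) (h₂ : f₂ ∈ CFset Q k) (hle : ∀ q, f₁ q ≤ f₂ q) :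
    langD A k f₂ ⊆ langD A k f₁ ∧
    (RealizableSigma I O (langD A k f₂) → RealizableSigma I O (langD A k f₁)) := by
  have hsub : langD A k f₂ ⊆ langD A k f₁ := by
    intro w hw n hq
    obtain ⟨q, hq⟩ := hq
    have hmono := detRun_mono A k hle w n q
    have htop : detRun A k f₂ w n q ≤ (k:ℤ) + 1 := by
      cases n with
      | zero => exact (h₂ q).2
      | succ n => exact detTrans_le_top A k _ _ q
    have : detRun A k f₂ w n q = (k:ℤ) + 1 := le_antisymm htop (hq ▸ hmono)
    exact hw n ⟨q, this⟩
  refine ⟨hsub, ?_⟩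
  rintro ⟨N, hN, Mach, hTot, hL⟩
  exact ⟨N, hN, Mach, hTot, fun w hw => hsub (hL w hw)⟩
end

section
/- For every universal coBüchi automaton A, every k ∈ ℕ, and every nonempty finite set F = {f_1, …, f_n} ⊆ CF(A,k) of counting functions: L(D(A,k)[⊔F]) = ⋂_{f ∈ F} L(D(A,k)[f]), where ⊔F is the pointwise maximum of the functions in F. -/
open scoped Classical

section Aux

variable {σ Q : Type} [Fintype Q]

/-- The set of predecessors used in `detTransFun`. -/
noncomputable def predF (A : UCB σ Q) (a : σ) (q : Q) (f : Q → ℤ) : Finset Q :=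
  Finset.univ.filter fun q' => q ∈ A.δ q' a ∧ 0 ≤ f q'

lemma mem_predF {A : UCB σ Q} {a : σ} {q q' : Q} {f : Q → ℤ} :
    q' ∈ predF A a q f ↔ q ∈ A.δ q' a ∧ 0 ≤ f q' := by
  simp [predF]

lemma detTransFun_def (A : UCB σ Q) (k : ℕ) (f : Q → ℤ) (a : σ) (q : Q) :
    detTransFun A k f a q =
      if h : (predF A a q f).Nonempty then
        min ((predF A a q f).sup' h f + (if A.col1 q then 1 else 0)) ((k : ℤ) + 1)
      else -1 := rfl

lemma detTrans_mem_CF (A : UCB σ Q) (k : ℕ) (f : Q → ℤ) (a : σ) :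
    detTransFun A k f a ∈ CFset Q k := by
  intro q
  rw [detTransFun_def]
  have hk : (0:ℤ) ≤ (k:ℤ) + 1 := by positivity
  have hx0 : (0:ℤ) ≤ if A.col1 q then 1 else 0 := by split_ifs <;> norm_num
  by_cases h : (predF A a q f).Nonempty
  · rw [dif_pos h]
    obtain ⟨q', hq'⟩ := id h
    obtain ⟨-, h2⟩ := mem_predF.mp hq'
    have h1 : f q' ≤ (predF A a q f).sup' h f := Finset.le_sup' f hq'
    exact ⟨le_min (by linarith) (by linarith), min_le_right _ _⟩
  · rw [dif_neg h]
    exact ⟨le_refl _, by linarith⟩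

lemma detRun_mem_CF (A : UCB σ Q) (k : ℕ) {f : Q → ℤ} (hf : f ∈ CFset Q k)
    (w : ℕ → σ) (n : ℕ) : detRun A k f w n ∈ CFset Q k := by
  induction n with
  | zero => exact hf
  | succ n ih => exact detTrans_mem_CF A k _ _

lemma detTrans_sup (A : UCB σ Q) (k : ℕ) {ι : Type} (F : Finset ι) (hne : F.Nonempty)
    (g : ι → Q → ℤ) (hCF : ∀ i ∈ F, g i ∈ CFset Q k) (a : σ) :
    detTransFun A k (fun q => F.sup' hne fun i => g i q) a
      = fun q => F.sup' hne fun i => detTransFun A k (g i) a q := by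
  funext q
  have hk : (0:ℤ) ≤ (k:ℤ) + 1 := by positivity
  have hx0 : (0:ℤ) ≤ if A.col1 q then 1 else 0 := by split_ifs <;> norm_num
  set S : Q → ℤ := fun q' => F.sup' hne fun i => g i q' with hSdef
  have hglesup : ∀ i ∈ F, ∀ q', g i q' ≤ S q' := by
    intro i hi q'
    show g i q' ≤ F.sup' hne fun j => g j q'
    exact Finset.le_sup' (fun j => g j q') hi
  apply le_antisymm
  · rw [detTransFun_def]
    by_cases h : (predF A a q S).Nonempty
    · rw [dif_pos h]
      obtain ⟨q1, hq1mem, hq1eq⟩ := Finset.exists_mem_eq_sup' h S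
      obtain ⟨hq1δ, hq1pos⟩ := mem_predF.mp hq1mem
      obtain ⟨i, hiF, hieq⟩ := Finset.exists_mem_eq_sup' hne (fun j => g j q1)
      have hSi : S q1 = g i q1 := hieq
      have hq1memi : q1 ∈ predF A a q (g i) :=
        mem_predF.mpr ⟨hq1δ, by rw [← hSi]; exact hq1pos⟩
      have hpredi : (predF A a q (g i)).Nonempty := ⟨q1, hq1memi⟩
      have hstep : detTransFun A k (g i) a q =
          min ((predF A a q (g i)).sup' hpredi (g i) + (if A.col1 q then 1 else 0))
            ((k:ℤ)+1) := by
        rw [detTransFun_def, dif_pos hpredi]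
      have h2 : g i q1 ≤ (predF A a q (g i)).sup' hpredi (g i) :=
        Finset.le_sup' (g i) hq1memi
      calc min ((predF A a q S).sup' h S + (if A.col1 q then 1 else 0)) ((k:ℤ)+1)
          ≤ detTransFun A k (g i) a q := by
            rw [hstep, hq1eq, hSi]
            exact min_le_min (by linarith) le_rfl
        _ ≤ F.sup' hne fun i => detTransFun A k (g i) a q :=
            Finset.le_sup' (fun i => detTransFun A k (g i) a q) hiF
    · rw [dif_neg h]
      obtain ⟨i, hi⟩ := hne
      calc (-1 : ℤ) ≤ detTransFun A k (g i) a q := (detTrans_mem_CF A k (g i) a q).1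
        _ ≤ _ := Finset.le_sup' (fun i => detTransFun A k (g i) a q) hi
  · refine Finset.sup'_le _ _ fun i hi => ?_
    by_cases hi' : (predF A a q (g i)).Nonempty
    · have hS' : (predF A a q S).Nonempty := by
        obtain ⟨q', hq'⟩ := hi'
        obtain ⟨h1, h2⟩ := mem_predF.mp hq'
        exact ⟨q', mem_predF.mpr ⟨h1, le_trans h2 (hglesup i hi q')⟩⟩
      rw [detTransFun_def (f := g i), dif_pos hi', detTransFun_def (f := S), dif_pos hS']
      refine min_le_min (add_le_add ?_ le_rfl) le_rfl
      refine Finset.sup'_le _ _ fun q' hq' => ?_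
      obtain ⟨h1, h2⟩ := mem_predF.mp hq'
      exact le_trans (hglesup i hi q')
        (Finset.le_sup' S (mem_predF.mpr ⟨h1, le_trans h2 (hglesup i hi q')⟩))
    · rw [detTransFun_def (f := g i), dif_neg hi']
      exact (detTrans_mem_CF A k S a q).1

lemma detRun_sup (A : UCB σ Q) (k : ℕ) (F : Finset (Q → ℤ)) (hne : F.Nonempty)
    (hCF : ∀ f ∈ F, f ∈ CFset Q k) (w : ℕ → σ) (n : ℕ) :
    detRun A k (fun q => F.sup' hne fun f => f q) w n
      = fun q => F.sup' hne fun f => detRun A k f w n q := by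
  induction n with
  | zero => rfl
  | succ n ih =>
    show detTransFun A k (detRun A k _ w n) (w n) = _
    rw [ih]
    exact detTrans_sup A k F hne (fun f => detRun A k f w n)
      (fun f hf => detRun_mem_CF A k (hCF f hf) w n) (w n)

end Aux

/-- `L(D(A,k)[⊔F]) = ⋂_{f ∈ F} L(D(A,k)[f])` for a nonempty finite set `F`
of counting functions, where `⊔F` is the pointwise maximum. -/
theorem stmt4 {σ Q : Type} [Fintype σ] [Fintype Q] [Nonempty Q]
    (A : UCB σ Q) (k : ℕ) (F : Finset (Q → ℤ)) (hne : F.Nonempty)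
    (hCF : ∀ f ∈ F, f ∈ CFset Q k) :
    langD A k (fun q => F.sup' hne fun f => f q) = ⋂ f ∈ F, langD A k f := by
  ext w
  simp only [langD, Set.mem_setOf_eq, Set.mem_iInter]
  constructor
  · intro hw f hf n hex
    obtain ⟨q, hq⟩ := hex
    apply hw n
    refine ⟨q, ?_⟩
    have hrw := congrFun (detRun_sup A k F hne hCF w n) q
    rw [hrw]
    apply le_antisymm
    · exact Finset.sup'_le _ _ fun g hg => (detRun_mem_CF A k (hCF g hg) w n q).2
    · rw [← hq]; exact Finset.le_sup' (fun g => detRun A k g w n q) hf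
  · intro hw n hex
    obtain ⟨q, hq⟩ := hex
    have hrw := congrFun (detRun_sup A k F hne hCF w n) q
    rw [hrw] at hq
    obtain ⟨f, hf, heq⟩ := Finset.exists_mem_eq_sup' hne (fun f => detRun A k f w n q)
    exact hw f hf n ⟨q, by rw [← heq, hq]⟩
end

section
/- Let P be a preMealy machine with state set M, let ∼ be an equivalence relation on M, and let p = (x, y, i) and p' = (x', y', i') be two distinct non-congruent points for ∼ such that U(∼, p) ≠ U(∼, p'). Then p' is a non-congruent point for U(∼, p), p is a non-congruent point for U(∼, p'), and U(U(∼, p), p') = U(U(∼, p'), p). In particular, the rewriting relation on equivalence relations that removes one non-congruent point is locally confluent. -/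
open scoped Classical

/-!
Merging the classes of `s` and `s'` yields the least equivalence relation containing `∼` that
relates `s` and `s'`. Hence both double merges are the equivalence generated by `∼` and the two
pairs of successors, so they coincide. If `p'` were congruent for `U(∼, p)`, its successors would
lie in the two merged classes, and merging them would not change `U(∼, p)`, i.e. `U(∼, p') = U(∼, p)`.
-/

section Umerge

variable {M : Type} {r q : M → M → Prop}

lemma le_umerge (r : M → M → Prop) (s s' : M) : r ≤ Umerge r s s' :=
  fun _ _ h => Or.inl h

lemma umerge_rel (hr : ∀ a, r a a) (s s' : M) : Umerge r s s' s s' :=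
  Or.inr (Or.inl ⟨hr s, hr s'⟩)

lemma Equivalence.umerge (hr : Equivalence r) (s s' : M) : Equivalence (Umerge r s s') := by
  refine ⟨fun a => Or.inl (hr.refl a), ?_, ?_⟩
  · rintro a b (h | h | h)
    exacts [Or.inl (hr.symm h), Or.inr (Or.inr h), Or.inr (Or.inl h)]
  · intro a b c hab hbc
    unfold Umerge at *
    have hsymm : ∀ {u v}, r u v → r v u := hr.symm
    have htrans : ∀ {u v w}, r u v → r v w → r u w := hr.trans
    grind

lemma umerge_le (hq : Equivalence q) (hrq : r ≤ q) {s s' : M} (hs : q s s') :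
    Umerge r s s' ≤ q := by
  rintro a b (h | ⟨ha, hb⟩ | ⟨hb, ha⟩)
  · exact hrq a b h
  · exact hq.trans (hq.trans (hrq a s ha) hs) (hq.symm (hrq b s' hb))
  · exact hq.trans (hq.trans (hrq a s' ha) (hq.symm hs)) (hq.symm (hrq b s hb))

lemma umerge_umerge_le (hr : Equivalence r) (s s' t t' : M) :
    Umerge (Umerge r s s') t t' ≤ Umerge (Umerge r t t') s s' := by
  have hr' := (hr.umerge t t').umerge s s'
  refine umerge_le hr' (umerge_le hr' ((le_umerge _ t t').trans (le_umerge _ s s')) ?_) ?_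
  · exact umerge_rel (hr.umerge t t').refl s s'
  · exact le_umerge _ s s' t t' (umerge_rel hr.refl t t')

lemma umerge_umerge_comm (hr : Equivalence r) (s s' t t' : M) :
    Umerge (Umerge r s s') t t' = Umerge (Umerge r t t') s s' :=
  le_antisymm (umerge_umerge_le hr s s' t t') (umerge_umerge_le hr t t' s s')

lemma umerge_eq_of_umerge (hr : Equivalence r) {s s' t t' : M} (h : Umerge r s s' t t')
    (ht : ¬ r t t') : Umerge r t t' = Umerge r s s' := by
  refine le_antisymm (umerge_le (hr.umerge s s') (le_umerge r s s') h) ?_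
  refine umerge_le (hr.umerge t t') (le_umerge r t t') ?_
  rcases h with h | ⟨hts, hts'⟩ | ⟨hts, hts'⟩
  · exact absurd h ht
  · exact Or.inr (Or.inl ⟨hr.symm hts, hr.symm hts'⟩)
  · exact Or.inr (Or.inr ⟨hr.symm hts', hr.symm hts⟩)

end Umerge

theorem stmt11_general {M : Type} (r : M → M → Prop)
    (hr : Equivalence r)
    (x y : M) (x' y' : M)
    (sx sy : M) (tx ty : M)
    (hxy : r x y) (hncp : ¬ r sx sy)
    (hx'y' : r x' y') (hncp' : ¬ r tx ty)
    (hUne : Umerge r sx sy ≠ Umerge r tx ty) :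
    (Umerge r sx sy x' y' ∧ ¬ Umerge r sx sy tx ty) ∧
    (Umerge r tx ty x y ∧ ¬ Umerge r tx ty sx sy) ∧
    (∀ a b, Umerge (Umerge r sx sy) tx ty a b ↔ Umerge (Umerge r tx ty) sx sy a b) :=
  ⟨⟨le_umerge r sx sy x' y' hx'y', fun h => hUne (umerge_eq_of_umerge hr h hncp').symm⟩,
    ⟨le_umerge r tx ty x y hxy, fun h => hUne (umerge_eq_of_umerge hr h hncp)⟩,
    fun a b => by rw [umerge_umerge_comm hr]⟩

/-- local confluence of the removal of non-congruent points. If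
`p = (x,y,i)` and `p' = (x',y',i')` are distinct non-congruent points for `r` with
`U(r,p) ≠ U(r,p')`, then `p'` is non-congruent for `U(r,p)`, `p` is non-congruent for
`U(r,p')`, and `U(U(r,p),p') = U(U(r,p'),p)`. -/
theorem stmt11 {I O M : Type} (P : PreMealy I O M) (r : M → M → Prop)
    (hr : Equivalence r)
    (x y : M) (i : I) (x' y' : M) (i' : I)
    (ox oy : O) (sx sy : M) (ox' oy' : O) (tx ty : M)
    (hxd : P.trans x i = some (ox, sx)) (hyd : P.trans y i = some (oy, sy))
    (hx'd : P.trans x' i' = some (ox', tx)) (hy'd : P.trans y' i' = some (oy', ty))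
    (hxy : r x y) (hncp : ¬ r sx sy)
    (hx'y' : r x' y') (hncp' : ¬ r tx ty)
    (hdist : (x, y, i) ≠ (x', y', i'))
    (hUne : Umerge r sx sy ≠ Umerge r tx ty) :
    (Umerge r sx sy x' y' ∧ ¬ Umerge r sx sy tx ty) ∧
    (Umerge r tx ty x y ∧ ¬ Umerge r tx ty sx sy) ∧
    (∀ a b, Umerge (Umerge r sx sy) tx ty a b ↔ Umerge (Umerge r tx ty) sx sy a b) :=
  stmt11_general r hr x y x' y' sx sy tx ty hxy hncp hx'y' hncp' hUne
end
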